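/- For every positive integer p and every real x with 0 < x < 1, Li_p(−x) + (−1)^p · Li_p(−1/x) = 2·(−1)·∑_{k=0}^{⌊p/2⌋} (ln(x)^(p−2k)/(p−2k)!) · Φ(−1, 2k, 1), where Φ(−1, 2k, 1) = ∑_{n≥0} (−1)^n/(n+1)^{2k} (interpreted as η(2k), with η(0) = 1/2). -/

import Mathlib

open MeasureTheory Real

/-- Li_p(w) for real w ≤ 0 via the integral representation
Li_p(w) = ((-1)^(p-1)/(p-1)!) ∫_0^1 w log(y)^(p-1)/(1 - w y) dy. -/
noncomputable def liInt (p : ℕ) (w : ℝ) : ℝ :=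
  ((-1 : ℝ) ^ (p - 1) / (Nat.factorial (p - 1))) *
    ∫ y in (0:ℝ)..1, w * Real.log y ^ (p - 1) / (1 - w * y)

/-- Dirichlet eta with the convention η(0) = 1/2. -/
noncomputable def etaC (s : ℕ) : ℝ :=
  if s = 0 then 1 / 2 else ∑' n : ℕ, (-1 : ℝ) ^ n / ((n : ℝ) + 1) ^ s

/-!
Write `m = p - 1` and `L = log x`. Up to the factor `1 / m!`, the left-hand side is
`∫₀¹ log y ^ m / (x + y) dy - ∫₀ˣ (L - log v) ^ m / (1 + v) dv`. Splitting the first integral at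
`y = x` and substituting `y = x u` on `[0, x]` and `y = x / v` on `[x, 1]`, the partial fraction
`1 / (v (1 + v)) = 1 / v - 1 / (1 + v)` turns it into
`∫₀¹ ((L + log u) ^ m - (L - log u) ^ m) / (1 + u) du - L ^ (m + 1) / (m + 1)`.
Expanding binomially only odd powers `j` of `log u` survive, and
`∫₀¹ log u ^ j / (1 + u) du = (-1) ^ j j! η(j + 1)` by integrating the geometric series termwise,
using `∫₀¹ u ^ n log u ^ j du = (-1) ^ j j! / (n + 1) ^ (j + 1)`.
-/

open Set Filter Topology
open scoped Nat Interval

lemma abs_log_pow_le_mul_rpow_neg {r u : ℝ} (hr : 0 < r) (hu0 : 0 < u) (hu1 : u ≤ 1) (j : ℕ) :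
    |log u| ^ j ≤ j ! / r ^ j * u ^ (-r) := by
  have hlog : |log u| = -log u := abs_of_nonpos (log_nonpos hu0.le hu1)
  have hexp := Real.pow_div_factorial_le_exp _ (mul_nonneg hr.le (abs_nonneg (log u))) j
  rw [mul_pow, hlog] at hexp
  rw [hlog, rpow_def_of_pos hu0, div_mul_eq_mul_div, le_div_iff₀ (by positivity),
    mul_neg, ← neg_mul, mul_comm (-log u)]
  rw [div_le_iff₀ (by positivity)] at hexp
  linarith

lemma intervalIntegrable_log_pow (j : ℕ) {a b : ℝ} :
    IntervalIntegrable (fun u => log u ^ j) volume a b := by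
  refine intervalIntegrable_of_even (fun u => by rw [log_neg_eq_log]) (fun t ht => ?_)
  refine IntervalIntegrable.trans (b := 1) ?_ ?_
  · have hdom :
        IntervalIntegrable (fun u : ℝ => j ! / 2⁻¹ ^ j * u ^ (-2⁻¹ : ℝ)) volume 0 1 :=
      (intervalIntegral.intervalIntegrable_rpow' (by norm_num)).const_mul _
    refine hdom.mono_fun ((measurable_log.pow_const j).aestronglyMeasurable) ?_
    rw [uIoc_of_le zero_le_one]
    filter_upwards [ae_restrict_mem measurableSet_Ioc] with u hu
    rw [norm_pow, norm_eq_abs, norm_of_nonneg (by have := hu.1; positivity)]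
    exact abs_log_pow_le_mul_rpow_neg (by norm_num) hu.1 hu.2 j
  · refine ((continuousOn_log.mono fun u hu => ?_).pow j).intervalIntegrable
    exact ((lt_min one_pos ht).trans_le hu.1).ne'

lemma IntervalIntegrable.div_const_add {f : ℝ → ℝ} {a b c : ℝ}
    (hf : IntervalIntegrable f volume a b) (ha : 0 ≤ a) (hb : 0 ≤ b) (hc : 0 < c) :
    IntervalIntegrable (fun u => f u / (c + u)) volume a b := by
  have hpos (u : ℝ) (hu : u ∈ [[a, b]]) : c + u ≠ 0 := by
    have : min a b ≤ u := hu.1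
    linarith [le_min ha hb]
  simpa only [div_eq_mul_inv] using
    hf.mul_continuousOn (g := fun u => (c + u)⁻¹)
      ((continuousOn_const.add continuousOn_id).inv₀ hpos)

lemma intervalIntegrable_add_mul_log_pow (c s : ℝ) (m : ℕ) {a b : ℝ} :
    IntervalIntegrable (fun u => (c + s * log u) ^ m) volume a b := by
  simp_rw [add_comm c, add_pow, mul_pow]
  simpa only [Finset.sum_fn] using IntervalIntegrable.sum (Finset.range (m + 1)) fun j _ =>
    (((intervalIntegrable_log_pow j).const_mul (s ^ j)).mul_const (c ^ (m - j))).mul_const _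

lemma tendsto_pow_mul_log_pow_nhdsGT_zero {n : ℕ} (hn : n ≠ 0) (j : ℕ) :
    Tendsto (fun u : ℝ => u ^ n * log u ^ j) (𝓝[>] 0) (𝓝 0) := by
  rcases Nat.eq_zero_or_pos j with rfl | hj
  · simpa using ((continuous_pow n).tendsto' 0 0 (zero_pow hn)).mono_left nhdsWithin_le_nhds
  · have h := (tendsto_log_mul_rpow_nhdsGT_zero (by positivity : (0 : ℝ) < n / j)).pow j
    rw [zero_pow hj.ne'] at h
    refine h.congr' (eventually_mem_nhdsWithin.mono fun u (hu : 0 < u) => ?_)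
    rw [mul_pow, ← rpow_natCast (u ^ _), ← rpow_mul hu.le,
      div_mul_cancel₀ _ (Nat.cast_ne_zero.mpr hj.ne'), rpow_natCast, mul_comm]

lemma integral_pow_mul_log_pow (n j : ℕ) :
    ∫ u in (0 : ℝ)..1, u ^ n * log u ^ j = (-1) ^ j * j ! / ((n : ℝ) + 1) ^ (j + 1) := by
  have hint (i : ℕ) : IntervalIntegrable (fun u : ℝ => u ^ n * log u ^ i) volume 0 1 :=
    (intervalIntegrable_log_pow i).continuousOn_mul (continuousOn_pow n)
  have hn : (n : ℝ) + 1 ≠ 0 := by positivity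
  induction j with
  | zero => simp [integral_pow]
  | succ j ih =>
    set F : ℝ → ℝ := fun u => u ^ (n + 1) * log u ^ (j + 1) / (n + 1)
    have hderiv : ∀ u ∈ Ioo (0 : ℝ) 1, HasDerivAt F
        (u ^ n * log u ^ (j + 1) + (j + 1) / (n + 1) * (u ^ n * log u ^ j)) u := by
      intro u hu
      refine (((hasDerivAt_pow (n + 1) u).mul
        ((hasDerivAt_log hu.1.ne').fun_pow (j + 1))).div_const ((n : ℝ) + 1)).congr_deriv ?_
      have hu0 : u ≠ 0 := hu.1.ne'
      simp only [Nat.add_sub_cancel]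
      push_cast
      field_simp
      ring
    have hF0 : Tendsto F (𝓝[>] 0) (𝓝 0) := by
      simpa [F] using (tendsto_pow_mul_log_pow_nhdsGT_zero n.succ_ne_zero (j + 1)).div_const
        ((n : ℝ) + 1)
    have hF1 : Tendsto F (𝓝[<] 1) (𝓝 0) := by
      have hc : ContinuousAt F 1 := by fun_prop (disch := norm_num)
      simpa [F] using hc.tendsto.mono_left nhdsWithin_le_nhds
    have hftc := intervalIntegral.integral_eq_sub_of_hasDerivAt_of_tendsto zero_lt_one hderiv
      ((hint _).add ((hint j).const_mul _)) hF0 hF1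
    rw [sub_self, intervalIntegral.integral_add (hint _) ((hint j).const_mul _),
      intervalIntegral.integral_const_mul, ih] at hftc
    rw [eq_neg_of_add_eq_zero_left hftc, Nat.factorial_succ]
    push_cast
    field_simp
    ring

lemma integral_log_pow_div_one_add {j : ℕ} (hj : j ≠ 0) :
    ∫ u in (0 : ℝ)..1, log u ^ j / (1 + u) = (-1) ^ j * j ! * etaC (j + 1) := by
  set F : ℕ → ℝ → ℝ := fun n u => (-1) ^ n * (u ^ n * log u ^ j)
  have hIoo (n : ℕ) : ∫ u in Ioo (0 : ℝ) 1, u ^ n * log u ^ j =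
      (-1) ^ j * j ! / ((n : ℝ) + 1) ^ (j + 1) := by
    rw [← integral_Ioc_eq_integral_Ioo, ← intervalIntegral.integral_of_le zero_le_one,
      integral_pow_mul_log_pow]
  have hFint (n : ℕ) : IntegrableOn (F n) (Ioo 0 1) :=
    (((intervalIntegrable_log_pow j).continuousOn_mul (continuousOn_pow n)).1.mono_set
      Ioo_subset_Ioc_self).const_mul _
  have hFnorm (n : ℕ) :
      ∫ u in Ioo (0 : ℝ) 1, ‖F n u‖ = j ! / ((n : ℝ) + 1) ^ (j + 1) := by
    have hnorm : EqOn (fun u => ‖F n u‖) (fun u => (-1) ^ j * (u ^ n * log u ^ j)) (Ioo 0 1) :=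
      fun u hu => by
        simp only [F, norm_mul, norm_pow, norm_neg, norm_one, one_pow, one_mul, norm_eq_abs,
          abs_of_pos hu.1, abs_of_nonpos (log_nonpos hu.1.le hu.2.le), neg_pow (log u)]
        ring
    rw [setIntegral_congr_fun measurableSet_Ioo hnorm, integral_const_mul, hIoo, ← mul_div_assoc,
      ← mul_assoc, ← pow_add, Even.neg_one_pow ⟨j, rfl⟩, one_mul]
  have hsummable : Summable fun n : ℕ => (j ! : ℝ) / ((n : ℝ) + 1) ^ (j + 1) := by
    have := (summable_nat_add_iff 1).mpr (Real.summable_nat_pow_inv.mpr (by omega : 1 < j + 1))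
    simpa [div_eq_mul_inv] using this.mul_left (j ! : ℝ)
  have hgeom : EqOn (fun u => ∑' n, F n u) (fun u => log u ^ j / (1 + u)) (Ioo 0 1) :=
    fun u hu => by
      have hu' : |-u| < 1 := by rw [abs_neg, abs_of_pos hu.1]; exact hu.2
      simp only [F, ← mul_assoc, ← mul_pow, neg_one_mul, tsum_mul_right,
        tsum_geometric_of_abs_lt_one hu', sub_neg_eq_add, div_eq_inv_mul]
  rw [intervalIntegral.integral_of_le zero_le_one, integral_Ioc_eq_integral_Ioo,
    ← setIntegral_congr_fun measurableSet_Ioo hgeom,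
    ← integral_tsum_of_summable_integral_norm hFint (by simpa only [hFnorm] using hsummable),
    etaC, if_neg j.succ_ne_zero, ← tsum_mul_left]
  refine tsum_congr fun n => ?_
  rw [integral_const_mul, hIoo]
  ring

lemma integral_add_mul_log_pow_div_one_add (c s : ℝ) (m : ℕ) :
    ∫ u in (0 : ℝ)..1, (c + s * log u) ^ m / (1 + u) =
      ∑ j ∈ Finset.range (m + 1),
        m.choose j * c ^ (m - j) * s ^ j * ∫ u in (0 : ℝ)..1, log u ^ j / (1 + u) := by
  have hexpand : (fun u => (c + s * log u) ^ m / (1 + u)) = fun u =>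
      ∑ j ∈ Finset.range (m + 1), m.choose j * c ^ (m - j) * s ^ j * (log u ^ j / (1 + u)) := by
    funext u
    rw [add_comm, add_pow, Finset.sum_div]
    refine Finset.sum_congr rfl fun j _ => ?_
    ring
  rw [hexpand, intervalIntegral.integral_finsetSum fun j _ =>
    (((intervalIntegrable_log_pow j).div_const_add le_rfl zero_le_one one_pos).const_mul _)]
  exact Finset.sum_congr rfl fun j _ => intervalIntegral.integral_const_mul _ _

lemma liInt_neg (m : ℕ) {x : ℝ} (hx : 0 < x) :
    liInt (m + 1) (-x) = -(∫ v in (0 : ℝ)..x, (log x - log v) ^ m / (1 + v)) / m ! := by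
  have hscale := intervalIntegral.mul_integral_comp_mul_left (a := 0) (b := 1)
    (f := fun v => (log x - log v) ^ m / (1 + v)) x
  rw [mul_zero, mul_one] at hscale
  rw [liInt, Nat.add_sub_cancel, ← hscale, ← intervalIntegral.integral_const_mul,
    ← intervalIntegral.integral_const_mul, ← intervalIntegral.integral_neg,
    ← intervalIntegral.integral_div]
  refine intervalIntegral.integral_congr_ae (ae_of_all _ fun y hy => ?_)
  rw [uIoc_of_le zero_le_one] at hy
  rw [log_mul hx.ne' hy.1.ne', sub_add_cancel_left, neg_pow]
  ring

lemma liInt_neg_inv (m : ℕ) {x : ℝ} (hx : 0 < x) :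
    liInt (m + 1) (-(1 / x)) =
      (-1) ^ (m + 1) / m ! * ∫ y in (0 : ℝ)..1, log y ^ m / (x + y) := by
  have hint : ∫ y in (0 : ℝ)..1, -(1 / x) * log y ^ m / (1 - -(1 / x) * y) =
      -∫ y in (0 : ℝ)..1, log y ^ m / (x + y) := by
    rw [← intervalIntegral.integral_neg]
    refine intervalIntegral.integral_congr fun y hy => ?_
    rw [uIcc_of_le zero_le_one] at hy
    have hxy : 0 < x + y := by linarith [hy.1]
    rw [show 1 - -(1 / x) * y = (x + y) / x by field_simp; ring]
    field_simp
  rw [liInt, Nat.add_sub_cancel, hint, pow_succ]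
  ring

lemma integral_zero_self_log_pow_div_add (m : ℕ) {x : ℝ} (hx : 0 < x) :
    ∫ y in (0 : ℝ)..x, log y ^ m / (x + y) =
      ∫ u in (0 : ℝ)..1, (log x + log u) ^ m / (1 + u) := by
  have hscale := intervalIntegral.mul_integral_comp_mul_left (a := 0) (b := 1)
    (f := fun y => log y ^ m / (x + y)) x
  rw [mul_zero, mul_one, ← intervalIntegral.integral_const_mul] at hscale
  rw [← hscale]
  refine intervalIntegral.integral_congr_ae (ae_of_all _ fun u hu => ?_)
  rw [uIoc_of_le zero_le_one] at hu
  have : 1 + u ≠ 0 := by linarith [hu.1]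
  rw [log_mul hx.ne' hu.1.ne']
  field_simp

lemma pos_of_mem_uIcc_one {x v : ℝ} (hx : 0 < x) (hv : v ∈ [[x, 1]]) : 0 < v :=
  (lt_min hx one_pos).trans_le hv.1

lemma integral_self_one_log_pow_div_add (m : ℕ) {x : ℝ} (hx : 0 < x) :
    ∫ y in x..1, log y ^ m / (x + y) = ∫ v in x..1, (log x - log v) ^ m / (v * (1 + v)) := by
  have hsub := intervalIntegral.integral_comp_mul_deriv_of_deriv_nonpos (a := x) (b := 1)
    (f := fun v => x / v) (f' := fun v => -(x / v ^ 2)) (g := fun y => log y ^ m / (x + y))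
    (continuousOn_const.div continuousOn_id fun v hv => (pos_of_mem_uIcc_one hx hv).ne')
    (fun v hv => by
      have hv0 := pos_of_mem_uIcc_one hx (Ioo_subset_Icc_self hv)
      simpa [div_eq_mul_inv] using (hasDerivAt_inv hv0.ne').const_mul x)
    (fun v _ => neg_nonpos.mpr (div_nonneg hx.le (sq_nonneg v)))
  rw [div_self hx.ne', div_one] at hsub
  rw [intervalIntegral.integral_symm, ← hsub, ← intervalIntegral.integral_neg]
  refine intervalIntegral.integral_congr fun v hv => ?_
  have hv0 := pos_of_mem_uIcc_one hx hv
  have : 1 + v ≠ 0 := by linarith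
  simp only [Function.comp, log_div hx.ne' hv0.ne']
  field_simp
  ring

lemma intervalIntegrable_log_sub_log_pow_div (m : ℕ) {x : ℝ} (hx : 0 < x) :
    IntervalIntegrable (fun v => (log x - log v) ^ m / v) volume x 1 :=
  have hne (v : ℝ) (hv : v ∈ [[x, 1]]) : v ≠ 0 := (pos_of_mem_uIcc_one hx hv).ne'
  (((continuousOn_const.sub (continuousOn_log.mono hne)).pow m).div continuousOn_id
    hne).intervalIntegrable

lemma integral_self_one_log_sub_log_pow_div (m : ℕ) {x : ℝ} (hx : 0 < x) :
    ∫ v in x..1, (log x - log v) ^ m / v = -(log x ^ (m + 1) / (m + 1)) := by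
  have hderiv (v : ℝ) (hv : v ∈ [[x, 1]]) :
      HasDerivAt (fun w => -(log x - log w) ^ (m + 1) / (m + 1)) ((log x - log v) ^ m / v) v := by
    have hv0 := (pos_of_mem_uIcc_one hx hv).ne'
    refine ((((hasDerivAt_log hv0).const_sub (log x)).pow (m + 1)).neg.div_const
      _).congr_deriv ?_
    push_cast
    field_simp
  rw [intervalIntegral.integral_eq_sub_of_hasDerivAt hderiv
    (intervalIntegrable_log_sub_log_pow_div m hx)]
  simp [neg_div]

lemma integral_log_pow_div_add_inversion (m : ℕ) {x : ℝ} (hx : 0 < x) :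
    (∫ y in (0 : ℝ)..1, log y ^ m / (x + y)) -
        ∫ v in (0 : ℝ)..x, (log x - log v) ^ m / (1 + v) =
      (∫ u in (0 : ℝ)..1, (log x + log u) ^ m / (1 + u)) -
        (∫ u in (0 : ℝ)..1, (log x - log u) ^ m / (1 + u)) - log x ^ (m + 1) / (m + 1) := by
  have hQ (a b : ℝ) (ha : 0 ≤ a) (hb : 0 ≤ b) :
      IntervalIntegrable (fun y => log y ^ m / (x + y)) volume a b :=
    (intervalIntegrable_log_pow m).div_const_add ha hb hx
  have hE (a b : ℝ) (ha : 0 ≤ a) (hb : 0 ≤ b) :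
      IntervalIntegrable (fun v => (log x - log v) ^ m / (1 + v)) volume a b := by
    simpa only [neg_one_mul, ← sub_eq_add_neg] using
      (intervalIntegrable_add_mul_log_pow (log x) (-1) m).div_const_add ha hb one_pos
  have hsplitQ : ∫ y in (0 : ℝ)..1, log y ^ m / (x + y) =
      (∫ y in (0 : ℝ)..x, log y ^ m / (x + y)) + ∫ y in x..1, log y ^ m / (x + y) :=
    (intervalIntegral.integral_add_adjacent_intervals (hQ 0 x le_rfl hx.le)
      (hQ x 1 hx.le zero_le_one)).symm
  have hsplitE : ∫ u in (0 : ℝ)..1, (log x - log u) ^ m / (1 + u) =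
      (∫ v in (0 : ℝ)..x, (log x - log v) ^ m / (1 + v)) +
        ∫ v in x..1, (log x - log v) ^ m / (1 + v) :=
    (intervalIntegral.integral_add_adjacent_intervals (hE 0 x le_rfl hx.le)
      (hE x 1 hx.le zero_le_one)).symm
  have hpartial : ∫ v in x..1, (log x - log v) ^ m / (v * (1 + v)) =
      (∫ v in x..1, (log x - log v) ^ m / v) - ∫ v in x..1, (log x - log v) ^ m / (1 + v) := by
    rw [← intervalIntegral.integral_sub (intervalIntegrable_log_sub_log_pow_div m hx)
      (hE x 1 hx.le zero_le_one)]
    refine intervalIntegral.integral_congr fun v hv => ?_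
    have hv0 := (pos_of_mem_uIcc_one hx hv).ne'
    have : 1 + v ≠ 0 := by linarith [pos_of_mem_uIcc_one hx hv]
    field_simp
    ring
  rw [hsplitQ, hsplitE, integral_zero_self_log_pow_div_add m hx,
    integral_self_one_log_pow_div_add m hx, hpartial, integral_self_one_log_sub_log_pow_div m hx]
  ring

lemma liInt_add_neg_one_pow_mul_liInt_inv (m : ℕ) {x : ℝ} (hx0 : 0 < x) :
    liInt (m + 1) (-x) + (-1) ^ (m + 1) * liInt (m + 1) (-(1 / x)) =
      (∑ j ∈ Finset.range (m + 1), (1 - (-1) ^ j) *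
          (m.choose j * log x ^ (m - j) * ∫ u in (0 : ℝ)..1, log u ^ j / (1 + u)) -
        log x ^ (m + 1) / (m + 1)) / m ! := by
  have hplus := integral_add_mul_log_pow_div_one_add (log x) 1 m
  have hminus := integral_add_mul_log_pow_div_one_add (log x) (-1) m
  simp only [one_mul, neg_one_mul, ← sub_eq_add_neg] at hplus hminus
  have hsum : (∫ u in (0 : ℝ)..1, (log x + log u) ^ m / (1 + u)) -
      ∫ u in (0 : ℝ)..1, (log x - log u) ^ m / (1 + u) =
        ∑ j ∈ Finset.range (m + 1), (1 - (-1) ^ j) *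
          (m.choose j * log x ^ (m - j) * ∫ u in (0 : ℝ)..1, log u ^ j / (1 + u)) := by
    rw [hplus, hminus, ← Finset.sum_sub_distrib]
    exact Finset.sum_congr rfl fun j _ => by ring
  have hsq : ((-1 : ℝ) ^ (m + 1)) * (-1) ^ (m + 1) = 1 := by
    rw [← pow_add]
    exact Even.neg_one_pow ⟨_, rfl⟩
  rw [liInt_neg m hx0, liInt_neg_inv m hx0, ← hsum]
  linear_combination ((integral_log_pow_div_add_inversion m hx0) +
    (∫ y in (0 : ℝ)..1, log y ^ m / (x + y)) * hsq) / (m ! : ℝ)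

lemma sum_range_one_sub_neg_one_pow_mul (f : ℕ → ℝ) (n : ℕ) :
    ∑ j ∈ Finset.range n, (1 - (-1) ^ j) * f j =
      2 * ∑ k ∈ Finset.range (n / 2), f (2 * k + 1) := by
  induction n with
  | zero => simp
  | succ n ih =>
    rw [Finset.sum_range_succ, ih]
    rcases Nat.even_or_odd' n with ⟨k, rfl | rfl⟩
    · rw [show (2 * k + 1) / 2 = 2 * k / 2 by omega, Even.neg_one_pow ⟨k, by ring⟩]
      ring
    · rw [show (2 * k + 1 + 1) / 2 = (2 * k + 1) / 2 + 1 by omega, Finset.sum_range_succ,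
        Odd.neg_one_pow ⟨k, rfl⟩, show (2 * k + 1) / 2 = k by omega]
      ring

theorem stmt_4_general (p : ℕ) (hp : 0 < p) (x : ℝ) (hx0 : 0 < x) :
    liInt p (-x) + (-1 : ℝ) ^ p * liInt p (-(1 / x)) =
      2 * (-1) * ∑ k ∈ Finset.range (p / 2 + 1),
        Real.log x ^ (p - 2 * k) / (Nat.factorial (p - 2 * k)) * etaC (2 * k) := by
  obtain ⟨m, rfl⟩ : ∃ m, p = m + 1 := ⟨p - 1, by omega⟩
  have hterm : ∀ j ∈ Finset.range (m + 1), (1 - (-1) ^ j) *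
      (m.choose j * log x ^ (m - j) * ∫ u in (0 : ℝ)..1, log u ^ j / (1 + u)) =
        (1 - (-1) ^ j) * -(m ! * (log x ^ (m - j) / (m - j) ! * etaC (j + 1))) := by
    intro j hj
    rcases Nat.even_or_odd j with hev | hodd
    · rw [hev.neg_one_pow, sub_self, zero_mul, zero_mul]
    have hchoose : (m.choose j : ℝ) * j ! * (m - j) ! = m ! := by
      exact_mod_cast Nat.choose_mul_factorial_mul_factorial (Finset.mem_range_succ_iff.mp hj)
    rw [integral_log_pow_div_one_add (by rintro rfl; simp at hodd), hodd.neg_one_pow, ← hchoose]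
    field_simp
  have heta0 : etaC (2 * 0) = 1 / 2 := if_pos rfl
  rw [liInt_add_neg_one_pow_mul_liInt_inv m hx0, Finset.sum_congr rfl hterm,
    sum_range_one_sub_neg_one_pow_mul, Finset.sum_range_succ', heta0]
  simp only [mul_add_one, mul_zero, Nat.sub_zero, Nat.factorial_succ, mul_neg,
    Finset.sum_neg_distrib, ← Finset.mul_sum]
  push_cast
  field_simp
  ring

theorem stmt_4 (p : ℕ) (hp : 0 < p) (x : ℝ) (hx0 : 0 < x) (hx1 : x < 1) :
    liInt p (-x) + (-1 : ℝ) ^ p * liInt p (-(1 / x)) =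
      2 * (-1) * ∑ k ∈ Finset.range (p / 2 + 1),
        Real.log x ^ (p - 2 * k) / (Nat.factorial (p - 2 * k)) * etaC (2 * k) :=
  stmt_4_general p hp x hx0
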